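/- arXiv:1408.0826 — 3 statements merged into one kernel-verified Lean document; each statement's English description precedes it below -/
import Mathlib

section
/- Let γ be a real random variable with mean 0 and unit variance, let g be measurable with 0 ≤ g ≤ 1, and suppose on a measurable set S, g(γ) = γ/η + β for constants η ≠ 0, β, with g = 0 on L, g = 1 on U, where L, S, U partition ℝ. Then SNDR⁻¹ = (C₂^S + η·C₁^U + η·β·C₁^S)⁻¹ − 1, where SNDR = (E[γg(γ)])²/(Var[g(γ)] − (E[γg(γ)])² + σ_v²/A²), C₂^S = E[γ²·1_S(γ)], C₁^U = E[γ·1_U(γ)], C₁^S = E[γ·1_S(γ)], provided η and β satisfy η = (E[1_S(γ)γg(γ)] + C₁^U)/(E[1_S(γ)g(γ)²] + C₀^U − β² + σ_v²/A²) and β = E[g(γ)]. -/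
open MeasureTheory Real

/-- SNDR of a piecewise-affine clipping nonlinearity: if `g` is `0` on `L`, affine
`γ/η + β` on `S` and `1` on `U`, with `η, β` satisfying the stationarity equations,
then `SNDR⁻¹ = (C₂^S + η C₁^U + η β C₁^S)⁻¹ − 1`. -/
theorem stmt_3 {Ω : Type*} [MeasurableSpace Ω] (μ : Measure Ω) [IsProbabilityMeasure μ]
    (γ : Ω → ℝ) (g : ℝ → ℝ) (L S U : Set ℝ) (η β A σv : ℝ)
    (hγ : Measurable γ) (hg : Measurable g)
    (hL : MeasurableSet L) (hS : MeasurableSet S) (hU : MeasurableSet U)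
    (hLS : Disjoint L S) (hLU : Disjoint L U) (hSU : Disjoint S U)
    (hcover : L ∪ S ∪ U = Set.univ)
    (hmean : ∫ ω, γ ω ∂μ = 0)
    (hvar : ∫ ω, (γ ω) ^ 2 ∂μ = 1)
    (hγ2 : Integrable (fun ω => (γ ω) ^ 2) μ)
    (hg01 : ∀ t, 0 ≤ g t ∧ g t ≤ 1)
    (hgL : ∀ t ∈ L, g t = 0)
    (hgS : ∀ t ∈ S, g t = t / η + β)
    (hgU : ∀ t ∈ U, g t = 1)
    (hη : η ≠ 0) (hA : 0 < A) (hσv : 0 ≤ σv)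
    (C0U C1U C1S C2S : ℝ)
    (hC0U : C0U = ∫ ω, Set.indicator U (fun _ => (1 : ℝ)) (γ ω) ∂μ)
    (hC1U : C1U = ∫ ω, Set.indicator U (fun t => t) (γ ω) ∂μ)
    (hC1S : C1S = ∫ ω, Set.indicator S (fun t => t) (γ ω) ∂μ)
    (hC2S : C2S = ∫ ω, Set.indicator S (fun t => t ^ 2) (γ ω) ∂μ)
    (hηeq : η = ((∫ ω, Set.indicator S (fun t => t * g t) (γ ω) ∂μ) + C1U) /
        ((∫ ω, Set.indicator S (fun t => (g t) ^ 2) (γ ω) ∂μ) + C0U - β ^ 2 + σv ^ 2 / A ^ 2))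
    (hβeq : β = ∫ ω, g (γ ω) ∂μ)
    (SNDR : ℝ)
    (hSNDR : SNDR = (∫ ω, γ ω * g (γ ω) ∂μ) ^ 2 /
        (((∫ ω, (g (γ ω)) ^ 2 ∂μ) - (∫ ω, g (γ ω) ∂μ) ^ 2)
          - (∫ ω, γ ω * g (γ ω) ∂μ) ^ 2 + σv ^ 2 / A ^ 2)) :
    SNDR⁻¹ = (C2S + η * C1U + η * β * C1S)⁻¹ - 1 := by
  -- membership helpers
  have hmem : ∀ t : ℝ, t ∈ L ∨ t ∈ S ∨ t ∈ U := by
    intro t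
    have ht : t ∈ L ∪ S ∪ U := hcover ▸ Set.mem_univ t
    rcases ht with (h | h) | h
    · exact Or.inl h
    · exact Or.inr (Or.inl h)
    · exact Or.inr (Or.inr h)
  have hgb : ∀ t : ℝ, |g t| ≤ 1 := fun t =>
    abs_le.mpr ⟨by linarith [(hg01 t).1], (hg01 t).2⟩
  -- integrability of γ
  have hIγ : Integrable γ μ := by
    have h1 : Integrable (fun ω => (γ ω) ^ 2 + 1) μ := hγ2.add (integrable_const 1)
    refine h1.mono' hγ.aestronglyMeasurable (Filter.Eventually.of_forall fun ω => ?_)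
    simp only [Real.norm_eq_abs]
    nlinarith [sq_nonneg (|γ ω| - 1), abs_nonneg (γ ω), sq_abs (γ ω)]
  -- integrability of the various pieces
  have hIf2 : Integrable (fun ω => Set.indicator S (fun t => t ^ 2) (γ ω)) μ := by
    refine hγ2.mono' ((((measurable_id.pow_const 2).indicator hS).comp hγ)).aestronglyMeasurable
      (Filter.Eventually.of_forall fun ω => ?_)
    have := norm_indicator_le_norm_self (fun t : ℝ => t ^ 2) (γ ω) (s := S)
    simpa [Real.norm_eq_abs, abs_of_nonneg (sq_nonneg (γ ω))] using this
  have hIf1 : Integrable (fun ω => Set.indicator S (fun t : ℝ => t) (γ ω)) μ := by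
    refine hIγ.abs.mono' (((measurable_id.indicator hS).comp hγ)).aestronglyMeasurable
      (Filter.Eventually.of_forall fun ω => ?_)
    have := norm_indicator_le_norm_self (fun t : ℝ => t) (γ ω) (s := S)
    simpa [Real.norm_eq_abs, abs_abs] using this
  have hIu1 : Integrable (fun ω => Set.indicator U (fun t : ℝ => t) (γ ω)) μ := by
    refine hIγ.abs.mono' (((measurable_id.indicator hU).comp hγ)).aestronglyMeasurable
      (Filter.Eventually.of_forall fun ω => ?_)
    have := norm_indicator_le_norm_self (fun t : ℝ => t) (γ ω) (s := U)
    simpa [Real.norm_eq_abs, abs_abs] using this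
  have hIu0 : Integrable (fun ω => Set.indicator U (fun _ : ℝ => (1:ℝ)) (γ ω)) μ := by
    refine (integrable_const (1:ℝ)).mono'
      (((measurable_const.indicator hU).comp hγ)).aestronglyMeasurable
      (Filter.Eventually.of_forall fun ω => ?_)
    have := norm_indicator_le_norm_self (fun _ : ℝ => (1:ℝ)) (γ ω) (s := U)
    simpa using this
  have hIsg2 : Integrable (fun ω => Set.indicator S (fun t => (g t) ^ 2) (γ ω)) μ := by
    refine (integrable_const (1:ℝ)).mono'
      ((((hg.pow_const 2).indicator hS).comp hγ)).aestronglyMeasurable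
      (Filter.Eventually.of_forall fun ω => ?_)
    have h1 := norm_indicator_le_norm_self (fun t => (g t) ^ 2) (γ ω) (s := S)
    have h2 : ‖(g (γ ω)) ^ 2‖ ≤ 1 := by
      have h3 := hgb (γ ω)
      have h4 := abs_nonneg (g (γ ω))
      simp only [Real.norm_eq_abs, abs_pow]
      nlinarith
    simpa using h1.trans h2
  -- identity for m
  have key1 : ∀ t : ℝ, t * g t = η⁻¹ * Set.indicator S (fun t => t ^ 2) t
      + β * Set.indicator S (fun t : ℝ => t) t + Set.indicator U (fun t : ℝ => t) t := by
    intro t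
    rcases hmem t with h | h | h
    · have h1 : t ∉ S := Set.disjoint_left.mp hLS h
      have h2 : t ∉ U := Set.disjoint_left.mp hLU h
      simp [Set.indicator_of_notMem, h1, h2, hgL t h]
    · have h1 : t ∉ U := Set.disjoint_left.mp hSU h
      simp only [Set.indicator_of_mem h, Set.indicator_of_notMem h1, hgS t h]
      field_simp
      ring
    · have h1 : t ∉ S := Set.disjoint_left.mp hSU.symm h
      simp [Set.indicator_of_mem h, Set.indicator_of_notMem h1, hgU t h]
  have key2 : ∀ t : ℝ, Set.indicator S (fun t => t * g t) t
      = η⁻¹ * Set.indicator S (fun t => t ^ 2) t + β * Set.indicator S (fun t : ℝ => t) t := by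
    intro t
    by_cases h : t ∈ S
    · simp only [Set.indicator_of_mem h, hgS t h]
      field_simp
    · simp [Set.indicator_of_notMem h]
  have key3 : ∀ t : ℝ, (g t) ^ 2 = Set.indicator S (fun t => (g t) ^ 2) t
      + Set.indicator U (fun _ : ℝ => (1:ℝ)) t := by
    intro t
    rcases hmem t with h | h | h
    · have h1 : t ∉ S := Set.disjoint_left.mp hLS h
      have h2 : t ∉ U := Set.disjoint_left.mp hLU h
      simp [Set.indicator_of_notMem, h1, h2, hgL t h]
    · have h1 : t ∉ U := Set.disjoint_left.mp hSU h
      simp [Set.indicator_of_mem h, Set.indicator_of_notMem h1]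
    · have h1 : t ∉ S := Set.disjoint_left.mp hSU.symm h
      simp [Set.indicator_of_mem h, Set.indicator_of_notMem h1, hgU t h]
  set m := ∫ ω, γ ω * g (γ ω) ∂μ with hm
  -- compute m
  have hmval : m = η⁻¹ * C2S + β * C1S + C1U := by
    rw [hm, hC2S, hC1S, hC1U]
    have : (fun ω => γ ω * g (γ ω))
        = fun ω => (η⁻¹ * Set.indicator S (fun t => t ^ 2) (γ ω)
            + β * Set.indicator S (fun t : ℝ => t) (γ ω))
          + Set.indicator U (fun t : ℝ => t) (γ ω) := by
      funext ω
      have := key1 (γ ω)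
      linarith
    have iA : Integrable (fun ω => η⁻¹ * Set.indicator S (fun t => t ^ 2) (γ ω)) μ :=
      hIf2.const_mul _
    have iB : Integrable (fun ω => β * Set.indicator S (fun t : ℝ => t) (γ ω)) μ :=
      hIf1.const_mul _
    have iAB : Integrable (fun ω => η⁻¹ * Set.indicator S (fun t => t ^ 2) (γ ω)
        + β * Set.indicator S (fun t : ℝ => t) (γ ω)) μ := iA.add iB
    rw [this, integral_add iAB hIu1, integral_add iA iB,
      integral_const_mul, integral_const_mul]
  -- compute ∫ 1_S (t g t)
  have hSint : (∫ ω, Set.indicator S (fun t => t * g t) (γ ω) ∂μ)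
      = η⁻¹ * C2S + β * C1S := by
    rw [hC2S, hC1S]
    have : (fun ω => Set.indicator S (fun t => t * g t) (γ ω))
        = fun ω => η⁻¹ * Set.indicator S (fun t => t ^ 2) (γ ω)
            + β * Set.indicator S (fun t : ℝ => t) (γ ω) := by
      funext ω; exact key2 (γ ω)
    have iA : Integrable (fun ω => η⁻¹ * Set.indicator S (fun t => t ^ 2) (γ ω)) μ :=
      hIf2.const_mul _
    have iB : Integrable (fun ω => β * Set.indicator S (fun t : ℝ => t) (γ ω)) μ :=
      hIf1.const_mul _
    rw [this, integral_add iA iB, integral_const_mul, integral_const_mul]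
  -- compute ∫ g²
  have hg2val : (∫ ω, (g (γ ω)) ^ 2 ∂μ)
      = (∫ ω, Set.indicator S (fun t => (g t) ^ 2) (γ ω) ∂μ) + C0U := by
    rw [hC0U]
    have : (fun ω => (g (γ ω)) ^ 2)
        = fun ω => Set.indicator S (fun t => (g t) ^ 2) (γ ω)
            + Set.indicator U (fun _ : ℝ => (1:ℝ)) (γ ω) := by
      funext ω; exact key3 (γ ω)
    rw [this, integral_add hIsg2 hIu0]
  -- now algebra
  set E2 := ∫ ω, (g (γ ω)) ^ 2 ∂μ with hE2
  set Q := E2 - β ^ 2 + σv ^ 2 / A ^ 2 with hQ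
  have hηQ : η = m / Q := by
    rw [hηeq, hSint]
    congr 1
    · rw [hmval]
    · rw [hQ, hg2val]
  have hmne : m ≠ 0 := by
    intro h; rw [hηQ, h] at hη; simp at hη
  have hQne : Q ≠ 0 := by
    intro h; rw [hηQ, h] at hη; simp at hη
  have hX : C2S + η * C1U + η * β * C1S = η * m := by
    rw [hmval, hηQ]; field_simp; ring
  have hD : SNDR = m ^ 2 / (Q - m ^ 2) := by
    rw [hSNDR, ← hβeq, hQ, hE2]; ring_nf
  rw [hD, hX, hηQ, inv_div]
  field_simp
end

section
/- Let γ have zero mean and unit variance, g : ℝ → [0,1] measurable, A > 0, σ_v² > 0. Then the SNDR given by (E[γg(γ)])²/(Var[g(γ)] − (E[γg(γ)])² + σ_v²/A²) satisfies SNDR ≤ A²/(4σ_v²), i.e., SNDR ≤ DSNR/4 where DSNR = A²/σ_v², provided the denominator is positive. -/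
open MeasureTheory Real

/-!
Write `α = E[γ g(γ)]` and `V = Var[g(γ)]`. Since `γ` is centred with unit variance, `α` is the
covariance of `γ` and `g(γ)`, so Cauchy–Schwarz gives `α² ≤ V`, while Popoviciu's inequality for
a variable with values in `[0, 1]` gives `V ≤ 1/4`. Hence the SNDR denominator `V - α² + σ_v²/A²`
is at least `σ_v²/A²` and the numerator at most `1/4`.
-/

namespace ProbabilityTheory

variable {Ω : Type*} [MeasurableSpace Ω] {μ : Measure Ω} {X Y : Ω → ℝ}

lemma covariance_sq_le_variance_mul_variance [IsFiniteMeasure μ] (hX : MemLp X 2 μ)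
    (hY : MemLp Y 2 μ) : cov[X, Y; μ] ^ 2 ≤ Var[X; μ] * Var[Y; μ] := by
  have hquad : ∀ t : ℝ, 0 ≤ Var[X; μ] * (t * t) + (-2 * cov[X, Y; μ]) * t + Var[Y; μ] := by
    intro t
    have h := variance_nonneg (Y - t • X) μ
    rw [variance_sub hY (hX.const_smul t), variance_smul, covariance_smul_right,
      covariance_comm] at h
    linarith
  have h := discrim_le_zero hquad
  rw [discrim] at h
  linarith

lemma sq_covariance_div_le_of_mem_Icc [IsProbabilityMeasure μ] (hX : MemLp X 2 μ)
    (hVarX : Var[X; μ] = 1) (hY : ∀ᵐ ω ∂μ, Y ω ∈ Set.Icc 0 1) (hYm : AEMeasurable Y μ)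
    {s : ℝ} (hs : 0 < s) :
    cov[X, Y; μ] ^ 2 / (Var[Y; μ] - cov[X, Y; μ] ^ 2 + s) ≤ 1 / (4 * s) := by
  have hcov : cov[X, Y; μ] ^ 2 ≤ Var[Y; μ] := by
    simpa [hVarX] using
      covariance_sq_le_variance_mul_variance hX (memLp_of_bounded hY hYm.aestronglyMeasurable 2)
  have hVarY : Var[Y; μ] ≤ 1 / 4 := by
    have h := variance_le_sq_of_bounded hY hYm
    norm_num at h
    exact h
  calc cov[X, Y; μ] ^ 2 / (Var[Y; μ] - cov[X, Y; μ] ^ 2 + s)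
      ≤ (1 / 4) / s := div_le_div₀ (by norm_num) (hcov.trans hVarY) hs (by linarith)
    _ = 1 / (4 * s) := by rw [div_div]

end ProbabilityTheory

open ProbabilityTheory in
theorem stmt_13_general {Ω : Type*} [MeasurableSpace Ω] (μ : Measure Ω) [IsProbabilityMeasure μ]
    (γ : Ω → ℝ) (g : ℝ → ℝ) (A σv : ℝ)
    (hγ : Measurable γ) (hg : Measurable g)
    (hγ2 : Integrable (fun ω => (γ ω) ^ 2) μ)
    (hmean : ∫ ω, γ ω ∂μ = 0)
    (hvar : ∫ ω, (γ ω) ^ 2 ∂μ = 1)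
    (hg01 : ∀ t, 0 ≤ g t ∧ g t ≤ 1)
    (hA : 0 < A) (hσv : 0 < σv ^ 2) :
    (∫ ω, γ ω * g (γ ω) ∂μ) ^ 2 /
        (((∫ ω, (g (γ ω)) ^ 2 ∂μ) - (∫ ω, g (γ ω) ∂μ) ^ 2)
          - (∫ ω, γ ω * g (γ ω) ∂μ) ^ 2 + σv ^ 2 / A ^ 2)
      ≤ A ^ 2 / (4 * σv ^ 2) := by
  have hγL2 : MemLp γ 2 μ := (memLp_two_iff_integrable_sq hγ.aestronglyMeasurable).2 hγ2
  have hgγ : ∀ᵐ ω ∂μ, g (γ ω) ∈ Set.Icc 0 1 := ae_of_all _ fun ω => hg01 (γ ω)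
  have hgγm : AEMeasurable (fun ω => g (γ ω)) μ := (hg.comp hγ).aemeasurable
  have hgγL2 : MemLp (fun ω => g (γ ω)) 2 μ := memLp_of_bounded hgγ hgγm.aestronglyMeasurable 2
  have hcov : cov[γ, fun ω => g (γ ω); μ] = ∫ ω, γ ω * g (γ ω) ∂μ := by
    simp [covariance_eq_sub hγL2 hgγL2, hmean]
  have hVarγ : Var[γ; μ] = 1 := by
    simpa [variance_eq_sub hγL2, hmean] using hvar
  have hVarg : Var[fun ω => g (γ ω); μ] = (∫ ω, (g (γ ω)) ^ 2 ∂μ) - (∫ ω, g (γ ω) ∂μ) ^ 2 := by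
    simp [variance_eq_sub hgγL2]
  have h := sq_covariance_div_le_of_mem_Icc hγL2 hVarγ hgγ hgγm
    (s := σv ^ 2 / A ^ 2) (div_pos hσv (by positivity))
  rw [hcov, hVarg] at h
  calc _ ≤ 1 / (4 * (σv ^ 2 / A ^ 2)) := h
    _ = A ^ 2 / (4 * σv ^ 2) := by field_simp

/-- SNDR upper bound by the dynamic signal-to-noise ratio: `SNDR ≤ A²/(4σ_v²)`. -/
theorem stmt_13 {Ω : Type*} [MeasurableSpace Ω] (μ : Measure Ω) [IsProbabilityMeasure μ]
    (γ : Ω → ℝ) (g : ℝ → ℝ) (A σv : ℝ)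
    (hγ : Measurable γ) (hg : Measurable g)
    (hγ2 : Integrable (fun ω => (γ ω) ^ 2) μ)
    (hmean : ∫ ω, γ ω ∂μ = 0)
    (hvar : ∫ ω, (γ ω) ^ 2 ∂μ = 1)
    (hg01 : ∀ t, 0 ≤ g t ∧ g t ≤ 1)
    (hA : 0 < A) (hσv : 0 < σv ^ 2)
    (hden : 0 < ((∫ ω, (g (γ ω)) ^ 2 ∂μ) - (∫ ω, g (γ ω) ∂μ) ^ 2)
        - (∫ ω, γ ω * g (γ ω) ∂μ) ^ 2 + σv ^ 2 / A ^ 2) :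
    (∫ ω, γ ω * g (γ ω) ∂μ) ^ 2 /
        (((∫ ω, (g (γ ω)) ^ 2 ∂μ) - (∫ ω, g (γ ω) ∂μ) ^ 2)
          - (∫ ω, γ ω * g (γ ω) ∂μ) ^ 2 + σv ^ 2 / A ^ 2)
      ≤ A ^ 2 / (4 * σv ^ 2) :=
  stmt_13_general μ γ g A σv hγ hg hγ2 hmean hvar hg01 hA hσv
end

section
/- Let γ have zero mean and unit variance, and let g be the double-sided limiter: g(γ) = 0 on L = (−∞, −βη], g(γ) = γ/η + β on S = (−βη, η−βη), g(γ) = 1 on U = [η−βη, ∞), with η > 0, 0 < β < 1. If η and β satisfy the consistency equations η = (C₀^U C₁^S + C₁^U − C₀^S C₁^U)/(C₀^U C₀^L + (1 − C₀^S)σ_v²/A²) and β = (C₀^U C₁^S + C₀^U C₁^U + C₁^S σ_v²/A²)/(C₀^U C₁^S + C₁^U − C₀^S C₁^U), then the SNDR of g equals 1/(1/R − 1) where R = C₂^S + η C₁^U + η β C₁^S. -/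
/-!
On each of its three regions the limiter is affine in `γ`, so `E[g]`, `E[g²]` and `E[γg]` are
linear combinations of the region moments `Cₙ^set`. The consistency equations are linear in
`η` and `βη`, with the common denominator `D = C₀^U C₀^L + (1 - C₀^S) σ_v²/A²`; substituting
their solution gives the orthogonality relation `η (Var[g] + σ_v²/A²) = E[γg]`, while
`R = η E[γg]`. Hence `SNDR = E[γg]² / (E[γg]/η - E[γg]²) = R / (1 - R)`.
-/

open MeasureTheory ProbabilityTheory Set

noncomputable def limiter (η β t : ℝ) : ℝ :=
  if t ≤ -β * η then 0 else if t < η - β * η then t / η + β else 1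

lemma measurable_limiter (η β : ℝ) : Measurable (limiter η β) :=
  Measurable.ite measurableSet_Iic measurable_const
    (Measurable.ite measurableSet_Iio (by fun_prop) measurable_const)

lemma limiter_mem_Icc {η : ℝ} (hη : 0 < η) (β t : ℝ) : limiter η β t ∈ Icc 0 1 := by
  simp only [limiter]
  split_ifs with h₁ h₂
  · simp
  · rw [div_add' _ _ _ hη.ne']
    exact ⟨div_nonneg (by linarith) hη.le, (div_le_one hη).2 (by linarith)⟩
  · simp

section RegionDecomposition

variable {η : ℝ} (hη : 0 < η) (β t : ℝ)
include hη

lemma limiter_eq_indicator : limiter η β t =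
    η⁻¹ * (Ioo (-β * η) (η - β * η)).indicator (fun t => t) t
      + β * (Ioo (-β * η) (η - β * η)).indicator (fun _ => 1) t
      + (Ici (η - β * η)).indicator (fun _ => 1) t := by
  simp only [limiter, indicator, mem_Ioo, mem_Ici]
  split_ifs <;> grind

lemma limiter_sq_eq_indicator : limiter η β t ^ 2 =
    η⁻¹ * η⁻¹ * (Ioo (-β * η) (η - β * η)).indicator (fun t => t ^ 2) t
      + 2 * β * η⁻¹ * (Ioo (-β * η) (η - β * η)).indicator (fun t => t) t
      + β ^ 2 * (Ioo (-β * η) (η - β * η)).indicator (fun _ => 1) t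
      + (Ici (η - β * η)).indicator (fun _ => 1) t := by
  simp only [limiter, indicator, mem_Ioo, mem_Ici]
  split_ifs <;> grind

lemma mul_limiter_eq_indicator : t * limiter η β t =
    η⁻¹ * (Ioo (-β * η) (η - β * η)).indicator (fun t => t ^ 2) t
      + β * (Ioo (-β * η) (η - β * η)).indicator (fun t => t) t
      + (Ici (η - β * η)).indicator (fun t => t) t := by
  simp only [limiter, indicator, mem_Ioo, mem_Ici]
  split_ifs <;> grind

end RegionDecomposition

lemma indicator_Iic_add_Ioo_add_Ici {a b : ℝ} (hab : a < b) (t : ℝ) :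
    (Iic a).indicator (fun _ => (1 : ℝ)) t + (Ioo a b).indicator (fun _ => 1) t
      + (Ici b).indicator (fun _ => 1) t = 1 := by
  simp only [indicator, mem_Iic, mem_Ioo, mem_Ici]
  split_ifs <;> grind

lemma sq_le_sq_add_sq_of_mem_Ioo {a b t : ℝ} (ht : t ∈ Ioo a b) : t ^ 2 ≤ a ^ 2 + b ^ 2 := by
  obtain ⟨hat, htb⟩ := ht
  rcases le_or_gt 0 t with h | h <;> nlinarith

section RegionMoments

variable {Ω : Type*} [MeasurableSpace Ω] {μ : Measure Ω} {X : Ω → ℝ}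

lemma integrable_indicator_comp {S : Set ℝ} {f h : ℝ → ℝ} (hX : AEMeasurable X μ)
    (hS : MeasurableSet S) (hf : Measurable f) (hh : Integrable (fun ω => h (X ω)) μ)
    (hfh : ∀ t ∈ S, ‖f t‖ ≤ ‖h t‖) :
    Integrable (fun ω => S.indicator f (X ω)) μ := by
  refine hh.mono ((hf.indicator hS).comp_aemeasurable hX).aestronglyMeasurable
    (ae_of_all _ fun ω => ?_)
  by_cases hω : X ω ∈ S
  · simpa [indicator_of_mem hω] using hfh _ hω
  · simp [indicator_of_notMem hω]

lemma integrable_indicator_one_comp [IsFiniteMeasure μ] (hX : AEMeasurable X μ) {S : Set ℝ}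
    (hS : MeasurableSet S) : Integrable (fun ω => S.indicator (fun _ => (1 : ℝ)) (X ω)) μ :=
  integrable_indicator_comp hX hS measurable_const (integrable_const 1) fun _ _ => le_rfl

lemma integrable_indicator_id_comp (hX : Integrable X μ) {S : Set ℝ} (hS : MeasurableSet S) :
    Integrable (fun ω => S.indicator (fun t => t) (X ω)) μ :=
  integrable_indicator_comp (h := fun t => t) hX.aemeasurable hS measurable_id hX
    fun _ _ => le_rfl

lemma integrable_indicator_Ioo_sq_comp [IsFiniteMeasure μ] (hX : AEMeasurable X μ) (a b : ℝ) :
    Integrable (fun ω => (Ioo a b).indicator (fun t => t ^ 2) (X ω)) μ :=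
  integrable_indicator_comp (h := fun _ => a ^ 2 + b ^ 2) hX measurableSet_Ioo (by fun_prop)
    (integrable_const _) fun t ht => by
      simpa only [Real.norm_eq_abs, abs_of_nonneg (sq_nonneg t),
        abs_of_nonneg (by positivity : (0 : ℝ) ≤ a ^ 2 + b ^ 2)] using sq_le_sq_add_sq_of_mem_Ioo ht

lemma integral_indicator_Iic_add_Ioo_add_Ici [IsProbabilityMeasure μ] (hX : AEMeasurable X μ)
    {a b : ℝ} (hab : a < b) :
    ∫ ω, (Iic a).indicator (fun _ => (1 : ℝ)) (X ω) ∂μ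
      + ∫ ω, (Ioo a b).indicator (fun _ => 1) (X ω) ∂μ
      + ∫ ω, (Ici b).indicator (fun _ => 1) (X ω) ∂μ = 1 := by
  have := integrable_indicator_one_comp hX (measurableSet_Iic (a := a))
  have := integrable_indicator_one_comp hX (measurableSet_Ioo (a := a) (b := b))
  have := integrable_indicator_one_comp hX (measurableSet_Ici (a := b))
  rw [← integral_add (by fun_prop) (by fun_prop), ← integral_add (by fun_prop) (by fun_prop)]
  simp [indicator_Iic_add_Ioo_add_Ici hab]

variable [IsFiniteMeasure μ] (hX : Integrable X μ) {η : ℝ} (hη : 0 < η) (β : ℝ)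
include hX hη

lemma integral_limiter_comp : ∫ ω, limiter η β (X ω) ∂μ =
    η⁻¹ * ∫ ω, (Ioo (-β * η) (η - β * η)).indicator (fun t => t) (X ω) ∂μ
      + β * ∫ ω, (Ioo (-β * η) (η - β * η)).indicator (fun _ => 1) (X ω) ∂μ
      + ∫ ω, (Ici (η - β * η)).indicator (fun _ => 1) (X ω) ∂μ := by
  have := integrable_indicator_id_comp hX (measurableSet_Ioo (a := -β * η) (b := η - β * η))
  have := integrable_indicator_one_comp hX.aemeasurable
    (measurableSet_Ioo (a := -β * η) (b := η - β * η))
  have := integrable_indicator_one_comp hX.aemeasurable (measurableSet_Ici (a := η - β * η))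
  simp_rw [limiter_eq_indicator hη]
  rw [integral_add (by fun_prop) (by fun_prop), integral_add (by fun_prop) (by fun_prop),
    integral_const_mul, integral_const_mul]

lemma integral_limiter_comp_sq : ∫ ω, limiter η β (X ω) ^ 2 ∂μ =
    η⁻¹ * η⁻¹ * ∫ ω, (Ioo (-β * η) (η - β * η)).indicator (fun t => t ^ 2) (X ω) ∂μ
      + 2 * β * η⁻¹ * ∫ ω, (Ioo (-β * η) (η - β * η)).indicator (fun t => t) (X ω) ∂μ
      + β ^ 2 * ∫ ω, (Ioo (-β * η) (η - β * η)).indicator (fun _ => 1) (X ω) ∂μ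
      + ∫ ω, (Ici (η - β * η)).indicator (fun _ => 1) (X ω) ∂μ := by
  have := integrable_indicator_Ioo_sq_comp hX.aemeasurable (μ := μ) (-β * η) (η - β * η)
  have := integrable_indicator_id_comp hX (measurableSet_Ioo (a := -β * η) (b := η - β * η))
  have := integrable_indicator_one_comp hX.aemeasurable
    (measurableSet_Ioo (a := -β * η) (b := η - β * η))
  have := integrable_indicator_one_comp hX.aemeasurable (measurableSet_Ici (a := η - β * η))
  simp_rw [limiter_sq_eq_indicator hη]
  rw [integral_add (by fun_prop) (by fun_prop), integral_add (by fun_prop) (by fun_prop),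
    integral_add (by fun_prop) (by fun_prop), integral_const_mul, integral_const_mul,
    integral_const_mul]

lemma integral_mul_limiter_comp : ∫ ω, X ω * limiter η β (X ω) ∂μ =
    η⁻¹ * ∫ ω, (Ioo (-β * η) (η - β * η)).indicator (fun t => t ^ 2) (X ω) ∂μ
      + β * ∫ ω, (Ioo (-β * η) (η - β * η)).indicator (fun t => t) (X ω) ∂μ
      + ∫ ω, (Ici (η - β * η)).indicator (fun t => t) (X ω) ∂μ := by
  have := integrable_indicator_Ioo_sq_comp hX.aemeasurable (μ := μ) (-β * η) (η - β * η)
  have := integrable_indicator_id_comp hX (measurableSet_Ioo (a := -β * η) (b := η - β * η))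
  have := integrable_indicator_id_comp hX (measurableSet_Ici (a := η - β * η))
  simp_rw [mul_limiter_eq_indicator hη]
  rw [integral_add (by fun_prop) (by fun_prop), integral_add (by fun_prop) (by fun_prop),
    integral_const_mul, integral_const_mul]

end RegionMoments

lemma limiter_orthogonality {η β s C0L C0S C0U C1S C1U C2S : ℝ} (hη : η ≠ 0)
    (hsum : C0L + C0S + C0U = 1)
    (hηeq : η = (C0U * C1S + C1U - C0S * C1U) / (C0U * C0L + (1 - C0S) * s))
    (hβeq : β = (C0U * C1S + C0U * C1U + C1S * s) / (C0U * C1S + C1U - C0S * C1U)) :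
    η * ((η⁻¹ * η⁻¹ * C2S + 2 * β * η⁻¹ * C1S + β ^ 2 * C0S + C0U)
      - (η⁻¹ * C1S + β * C0S + C0U) ^ 2 + s) = η⁻¹ * C2S + β * C1S + C1U := by
  obtain rfl : C0L = 1 - C0S - C0U := by linarith
  set D := C0U * (1 - C0S - C0U) + (1 - C0S) * s with hD
  set N := C0U * C1S + C1U - C0S * C1U with hN
  have hD0 : D ≠ 0 := by rintro h; rw [h, div_zero] at hηeq; exact hη hηeq
  have hN0 : N ≠ 0 := by rintro h; rw [h, zero_div] at hηeq; exact hη hηeq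
  subst hηeq hβeq
  field_simp
  rw [hD, hN]
  ring

lemma sq_div_sub_sq_add_eq_of_orthogonal {x V s η : ℝ} (hη : η ≠ 0) (hx : x ≠ 0)
    (h : η * (V + s) = x) : x ^ 2 / (V - x ^ 2 + s) = 1 / (1 / (η * x) - 1) := by
  have hV : V + s = x / η := by rw [← h]; field_simp
  rw [sub_add_eq_add_sub, hV]
  rcases eq_or_ne (η * x) 1 with h1 | h1
  · obtain rfl : x = 1 / η := by field_simp; linarith
    field_simp
  · have h1' : 1 - η * x ≠ 0 := sub_ne_zero.2 (Ne.symm h1)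
    field_simp

theorem stmt_19_general {Ω : Type*} [MeasurableSpace Ω] (μ : Measure Ω) [IsProbabilityMeasure μ]
    (γ : Ω → ℝ) (g : ℝ → ℝ) (η β A σv2 : ℝ)
    (hγ1 : Integrable γ μ)
    (hη : 0 < η)
    (hA : 0 < A) (hσv2 : 0 < σv2)
    (hgdef : ∀ t : ℝ, g t =
      if t ≤ -β * η then 0 else if t < η - β * η then t / η + β else 1)
    (C0L C0S C0U C1S C1U C2S : ℝ)
    (hC0L : C0L = ∫ ω, Set.indicator (Set.Iic (-β * η)) (fun _ => (1 : ℝ)) (γ ω) ∂μ)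
    (hC0S : C0S = ∫ ω, Set.indicator (Set.Ioo (-β * η) (η - β * η)) (fun _ => (1 : ℝ)) (γ ω) ∂μ)
    (hC0U : C0U = ∫ ω, Set.indicator (Set.Ici (η - β * η)) (fun _ => (1 : ℝ)) (γ ω) ∂μ)
    (hC1S : C1S = ∫ ω, Set.indicator (Set.Ioo (-β * η) (η - β * η)) (fun t => t) (γ ω) ∂μ)
    (hC1U : C1U = ∫ ω, Set.indicator (Set.Ici (η - β * η)) (fun t => t) (γ ω) ∂μ)
    (hC2S : C2S = ∫ ω, Set.indicator (Set.Ioo (-β * η) (η - β * η)) (fun t => t ^ 2) (γ ω) ∂μ)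
    (hηeq : η = (C0U * C1S + C1U - C0S * C1U) /
        (C0U * C0L + (1 - C0S) * (σv2 / A ^ 2)))
    (hβeq : β = (C0U * C1S + C0U * C1U + C1S * (σv2 / A ^ 2)) /
        (C0U * C1S + C1U - C0S * C1U))
    (R SNDR : ℝ)
    (hR : R = C2S + η * C1U + η * β * C1S)
    (hSNDR : SNDR = (∫ ω, γ ω * g (γ ω) ∂μ) ^ 2 /
        (((∫ ω, (g (γ ω)) ^ 2 ∂μ) - (∫ ω, g (γ ω) ∂μ) ^ 2)
          - (∫ ω, γ ω * g (γ ω) ∂μ) ^ 2 + σv2 / A ^ 2)) :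
    SNDR = 1 / (1 / R - 1) := by
  obtain rfl : g = limiter η β := funext hgdef
  have hEg := integral_limiter_comp hγ1 hη β
  have hEg2 := integral_limiter_comp_sq hγ1 hη β
  have hEγg := integral_mul_limiter_comp hγ1 hη β
  rw [← hC0S, ← hC0U, ← hC1S] at hEg
  rw [← hC0S, ← hC0U, ← hC1S, ← hC2S] at hEg2
  rw [← hC1S, ← hC1U, ← hC2S] at hEγg
  have hsum : C0L + C0S + C0U = 1 := by
    rw [hC0L, hC0S, hC0U]
    exact integral_indicator_Iic_add_Ioo_add_Ici hγ1.aemeasurable (by linarith)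
  have hvar : 0 ≤ ∫ ω, limiter η β (γ ω) ^ 2 ∂μ - (∫ ω, limiter η β (γ ω) ∂μ) ^ 2 := by
    have hmem : MemLp (fun ω => limiter η β (γ ω)) 2 μ :=
      memLp_of_bounded (ae_of_all _ fun ω => limiter_mem_Icc hη β (γ ω))
        ((measurable_limiter η β).comp_aemeasurable hγ1.aemeasurable).aestronglyMeasurable 2
    simpa [variance_eq_sub hmem] using variance_nonneg (fun ω => limiter η β (γ ω)) μ
  have horth : η * ((∫ ω, limiter η β (γ ω) ^ 2 ∂μ - (∫ ω, limiter η β (γ ω) ∂μ) ^ 2)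
      + σv2 / A ^ 2) = ∫ ω, γ ω * limiter η β (γ ω) ∂μ := by
    rw [hEg2, hEg, hEγg]
    exact limiter_orthogonality hη.ne' hsum hηeq hβeq
  have hx : ∫ ω, γ ω * limiter η β (γ ω) ∂μ ≠ 0 := by
    rw [← horth]
    positivity
  have hRx : R = η * ∫ ω, γ ω * limiter η β (γ ω) ∂μ := by
    rw [hR, hEγg]
    field_simp
    ring
  rw [hSNDR, hRx]
  exact sq_div_sub_sq_add_eq_of_orthogonal hη.ne' hx horth

/-- Closed-form SNDR of the optimal double-sided limiter: if `η, β` satisfy the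
consistency equations, then `SNDR = 1/(1/R − 1)` with `R = C₂^S + ηC₁^U + ηβC₁^S`. -/
theorem stmt_19 {Ω : Type*} [MeasurableSpace Ω] (μ : Measure Ω) [IsProbabilityMeasure μ]
    (γ : Ω → ℝ) (g : ℝ → ℝ) (η β A σv2 : ℝ)
    (hγ : Measurable γ)
    (hγ1 : Integrable γ μ)
    (hγ2 : Integrable (fun ω => (γ ω) ^ 2) μ)
    (hmean : ∫ ω, γ ω ∂μ = 0)
    (hvar : ∫ ω, (γ ω) ^ 2 ∂μ = 1)
    (hη : 0 < η) (hβ : 0 < β) (hβ1 : β < 1)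
    (hA : 0 < A) (hσv2 : 0 < σv2)
    (hgdef : ∀ t : ℝ, g t =
      if t ≤ -β * η then 0 else if t < η - β * η then t / η + β else 1)
    (C0L C0S C0U C1S C1U C2S : ℝ)
    (hC0L : C0L = ∫ ω, Set.indicator (Set.Iic (-β * η)) (fun _ => (1 : ℝ)) (γ ω) ∂μ)
    (hC0S : C0S = ∫ ω, Set.indicator (Set.Ioo (-β * η) (η - β * η)) (fun _ => (1 : ℝ)) (γ ω) ∂μ)
    (hC0U : C0U = ∫ ω, Set.indicator (Set.Ici (η - β * η)) (fun _ => (1 : ℝ)) (γ ω) ∂μ)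
    (hC1S : C1S = ∫ ω, Set.indicator (Set.Ioo (-β * η) (η - β * η)) (fun t => t) (γ ω) ∂μ)
    (hC1U : C1U = ∫ ω, Set.indicator (Set.Ici (η - β * η)) (fun t => t) (γ ω) ∂μ)
    (hC2S : C2S = ∫ ω, Set.indicator (Set.Ioo (-β * η) (η - β * η)) (fun t => t ^ 2) (γ ω) ∂μ)
    (hηeq : η = (C0U * C1S + C1U - C0S * C1U) /
        (C0U * C0L + (1 - C0S) * (σv2 / A ^ 2)))
    (hβeq : β = (C0U * C1S + C0U * C1U + C1S * (σv2 / A ^ 2)) /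
        (C0U * C1S + C1U - C0S * C1U))
    (R SNDR : ℝ)
    (hR : R = C2S + η * C1U + η * β * C1S)
    (hSNDR : SNDR = (∫ ω, γ ω * g (γ ω) ∂μ) ^ 2 /
        (((∫ ω, (g (γ ω)) ^ 2 ∂μ) - (∫ ω, g (γ ω) ∂μ) ^ 2)
          - (∫ ω, γ ω * g (γ ω) ∂μ) ^ 2 + σv2 / A ^ 2)) :
    SNDR = 1 / (1 / R - 1) :=
  stmt_19_general μ γ g η β A σv2 hγ1 hη hA hσv2 hgdef C0L C0S C0U C1S C1U C2S hC0L hC0S hC0U hC1S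
    hC1U hC2S hηeq hβeq R SNDR hR hSNDR
end
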